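/- Let A be a commutative ring, R a positive totally ordered aura with tempered growth, and |·| : A → R a power-multiplicative seminorm such that |2| ≤ 1 (where 2 denotes the image of 2 ∈ ℤ in A). Then |n| ≤ 1 for every n ∈ ℕ (image of n in A), and |·| is non-archimedean: |a + b| ≤ max(|a|, |b|) for all a, b ∈ A. -/

import Mathlib

/-!
Writing `m = 2 * (m / 2) + m % 2`, the bound `|2| ≤ 1` gives `|m| ≤ k` whenever `m < 2 ^ k`.
Hence `|n| ^ k = |n ^ k| ≤ k * size n + 1` grows at most linearly in `k`, and tempered growth
forces `|n| ≤ 1`. With that, the binomial theorem gives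
`|a + b| ^ n = |(a + b) ^ n| ≤ (n + 1) * max (|a|, |b|) ^ n`, so `|a + b| / max (|a|, |b|)` has
linearly bounded powers and is again at most `1`.
-/

open Polynomial Finset

def TemperedGrowth (R : Type*) [Semiring R] [LE R] : Prop :=
  ∀ P : ℕ[X], P ≠ 0 → ∀ x : R, (∀ n : ℕ, x ^ n ≤ ((P.eval n : ℕ) : R)) → x ≤ 1

namespace TemperedGrowth

variable {R : Type*}

theorem le_one_of_pow_le [Semiring R] [LE R] (hR : TemperedGrowth R) {x : R} (c : ℕ)
    (hx : ∀ n : ℕ, x ^ n ≤ ((c * n + 1 : ℕ) : R)) : x ≤ 1 := by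
  have hP : (C c * X + 1 : ℕ[X]) ≠ 0 := fun h => by simpa using congrArg (eval 0) h
  exact hR _ hP x fun n => by simpa using hx n

theorem le_of_pow_le_mul_pow [Semifield R] [Preorder R] [MulLeftMono R]
    (hR : TemperedGrowth R) {x y : R} (c : ℕ)
    (hxy : ∀ n : ℕ, x ^ n ≤ ((c * n + 1 : ℕ) : R) * y ^ n) : x ≤ y := by
  rcases eq_or_ne y 0 with rfl | hy
  · simpa using hxy 1
  have hxy1 : x / y ≤ 1 := hR.le_one_of_pow_le c fun n => calc
    (x / y) ^ n = x ^ n * (y ^ n)⁻¹ := by rw [div_pow, div_eq_mul_inv]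
    _ ≤ ((c * n + 1 : ℕ) : R) * y ^ n * (y ^ n)⁻¹ := mul_le_mul_left (hxy n) _
    _ = ((c * n + 1 : ℕ) : R) := by rw [mul_assoc, mul_inv_cancel₀ (pow_ne_zero n hy), mul_one]
  calc x = x / y * y := (div_mul_cancel₀ x hy).symm
    _ ≤ 1 * y := mul_le_mul_left hxy1 y
    _ = y := one_mul y

end TemperedGrowth

structure IsRingSeminorm {A R : Type*} [Semiring A] [Semiring R] [LE R] (f : A → R) : Prop where
  map_zero : f 0 = 0
  map_one : f 1 = 1
  map_mul_le : ∀ a b, f (a * b) ≤ f a * f b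
  map_add_le : ∀ a b, f (a + b) ≤ f a + f b

namespace IsRingSeminorm

variable {A R : Type*} [CommSemiring A] {f : A → R}

section OrderedSemiring

variable [CommSemiring R] [PartialOrder R] [IsOrderedAddMonoid R] [MulLeftMono R]

theorem map_natCast_le_of_lt_two_pow [ZeroLEOneClass R] (hf : IsRingSeminorm f) (h2 : f 2 ≤ 1)
    {k m : ℕ} (hm : m < 2 ^ k) : f m ≤ k := by
  induction k generalizing m with
  | zero => simp_all [hf.map_zero]
  | succ k ih =>
    have hdigit : f ((m % 2 : ℕ) : A) ≤ 1 := by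
      rcases Nat.mod_two_eq_zero_or_one m with h | h <;> simp [h, hf.map_zero, hf.map_one]
    calc f m = f (2 * ((m / 2 : ℕ) : A) + ((m % 2 : ℕ) : A)) := by
          rw [← Nat.cast_ofNat, ← Nat.cast_mul, ← Nat.cast_add, Nat.div_add_mod]
      _ ≤ f 2 * f ((m / 2 : ℕ) : A) + f ((m % 2 : ℕ) : A) :=
          (hf.map_add_le _ _).trans (add_le_add_left (hf.map_mul_le _ _) _)
      _ ≤ 1 * k + 1 := add_le_add (mul_le_mul' h2 (ih (by omega))) hdigit
      _ = (k + 1 : ℕ) := by push_cast; ring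

theorem map_natCast_le_one [ZeroLEOneClass R] (hf : IsRingSeminorm f) (hR : TemperedGrowth R)
    (hpm : ∀ (a : A) (n : ℕ), f (a ^ n) = f a ^ n) (h2 : f 2 ≤ 1) (n : ℕ) : f n ≤ 1 := by
  refine hR.le_one_of_pow_le (Nat.size n) fun k => ?_
  have hlt : n ^ k < 2 ^ (Nat.size n * k + 1) := calc
    n ^ k ≤ (2 ^ Nat.size n) ^ k := Nat.pow_le_pow_left (Nat.lt_size_self n).le k
    _ = 2 ^ (Nat.size n * k) := (pow_mul 2 _ k).symm
    _ < 2 ^ (Nat.size n * k + 1) := Nat.pow_lt_pow_succ one_lt_two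
  rw [← hpm, ← Nat.cast_pow]
  exact hf.map_natCast_le_of_lt_two_pow h2 hlt

end OrderedSemiring

theorem map_add_pow_le [CommSemiring R] [LinearOrder R] [IsOrderedAddMonoid R] [MulLeftMono R]
    (hf : IsRingSeminorm f) (hpm : ∀ (a : A) (n : ℕ), f (a ^ n) = f a ^ n)
    (hnat : ∀ n : ℕ, f n ≤ 1) (a b : A) (n : ℕ) :
    f ((a + b) ^ n) ≤ (n + 1 : ℕ) * max (f a) (f b) ^ n := by
  set M := max (f a) (f b)
  have hterm : ∀ i ∈ range (n + 1), f (a ^ i * b ^ (n - i) * n.choose i) ≤ M ^ n := by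
    intro i hi
    calc f (a ^ i * b ^ (n - i) * n.choose i) ≤ f a ^ i * f b ^ (n - i) * f (n.choose i) := by
          rw [← hpm, ← hpm]
          exact (hf.map_mul_le _ _).trans (mul_le_mul_left (hf.map_mul_le _ _) _)
      _ ≤ M ^ i * M ^ (n - i) * 1 := mul_le_mul'
          (mul_le_mul' (pow_le_pow_left' (le_max_left _ _) i)
            (pow_le_pow_left' (le_max_right _ _) (n - i))) (hnat _)
      _ = M ^ n := by rw [mul_one, ← pow_add, Nat.add_sub_cancel' (mem_range_succ_iff.mp hi)]
  calc f ((a + b) ^ n) ≤ ∑ i ∈ range (n + 1), f (a ^ i * b ^ (n - i) * n.choose i) := by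
        rw [add_pow]
        exact le_sum_of_subadditive f hf.map_zero.le hf.map_add_le _ _
    _ ≤ #(range (n + 1)) • M ^ n := sum_le_card_nsmul _ _ _ hterm
    _ = (n + 1 : ℕ) * M ^ n := by rw [card_range, nsmul_eq_mul]

theorem map_add_le_max [Semifield R] [LinearOrder R] [IsOrderedAddMonoid R] [MulLeftMono R]
    (hf : IsRingSeminorm f) (hR : TemperedGrowth R)
    (hpm : ∀ (a : A) (n : ℕ), f (a ^ n) = f a ^ n) (hnat : ∀ n : ℕ, f n ≤ 1) (a b : A) :
    f (a + b) ≤ max (f a) (f b) :=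
  hR.le_of_pow_le_mul_pow 1 fun n => by
    simpa only [← hpm, one_mul] using hf.map_add_pow_le hpm hnat a b n

end IsRingSeminorm

/-- A tempered power-multiplicative seminorm with `|2| ≤ 1` satisfies `|n| ≤ 1` for all
`n : ℕ` and is non-archimedean. -/
theorem tempered_powmult_two_le_one_nonarchimedean {A : Type*} [CommRing A]
    {R : Type*} [Semifield R] [LinearOrder R]
    (hadd : ∀ x y z t : R, x ≤ z → y ≤ t → x + y ≤ z + t)
    (hmul : ∀ x y z t : R, x ≤ z → y ≤ t → x * y ≤ z * t)
    (hpos : (0 : R) < 1)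
    (htemp : ∀ P : Polynomial ℕ, P ≠ 0 →
      ∀ x : R, (∀ n : ℕ, x ^ n ≤ ((P.eval n : ℕ) : R)) → x ≤ 1)
    (f : A → R)
    (hf0 : f 0 = 0) (hf1 : f 1 = 1)
    (hfm : ∀ a b : A, f (a * b) ≤ f a * f b)
    (hfa : ∀ a b : A, f (a + b) ≤ f a + f b)
    (hpm : ∀ (a : A) (n : ℕ), f (a ^ n) = f a ^ n)
    (h2 : f ((2 : ℤ) : A) ≤ 1) :
    (∀ n : ℕ, f ((n : ℕ) : A) ≤ 1) ∧ ∀ a b : A, f (a + b) ≤ max (f a) (f b) := by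
  have : IsOrderedAddMonoid R :=
    ⟨fun _ _ h _ => hadd _ _ _ _ h le_rfl, fun _ _ h _ => hadd _ _ _ _ le_rfl h⟩
  have : MulLeftMono R := ⟨fun _ _ _ h => hmul _ _ _ _ le_rfl h⟩
  have : ZeroLEOneClass R := ⟨hpos.le⟩
  have hf : IsRingSeminorm f := ⟨hf0, hf1, hfm, hfa⟩
  have hnat := hf.map_natCast_le_one htemp hpm (by simpa using h2)
  exact ⟨hnat, hf.map_add_le_max htemp hpm hnat⟩
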